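/- Let Q ∈ ℝ^{n×n} be symmetric positive semidefinite, c ∈ ℝ^n, λ > 0, and define f(x) := (1/2)·xᵀQx + cᵀx + λ‖x‖₂. Suppose η > 0 is such that the matrix ηQ + (λ²/2)·I_n is invertible and the vector x* := −η·(ηQ + (λ²/2)·I_n)^{-1} c satisfies ‖x*‖₂ = 2η/λ. Then x* is a global minimizer of f over ℝ^n. -/

import Mathlib

open Matrix

/-!
Writing `μ := λ² / (2η)`, the defining equation of `x*` says `Q x* + c + μ x* = 0`, and the norm
condition says `μ ‖x*‖ = λ`, so `-(Q x* + c) = λ x* / ‖x*‖` is a subgradient of `λ‖·‖` at `x*`.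
The tangent inequality of the convex quadratic part and Cauchy–Schwarz for the norm then give
`f x - f x* ≥ ½ (x - x*)ᵀ Q (x - x*) + μ (‖x*‖ ‖x‖ - x*ᵀ x) ≥ 0`.
-/

variable {ι : Type*} [Fintype ι]

noncomputable def groupLassoObjective (Q : Matrix ι ι ℝ) (c : ι → ℝ) (lam : ℝ) (x : ι → ℝ) : ℝ :=
  (1 / 2) * (x ⬝ᵥ Q *ᵥ x) + c ⬝ᵥ x + lam * ‖WithLp.toLp 2 x‖

theorem dotProduct_le_norm_toLp_mul_norm_toLp (x y : ι → ℝ) :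
    x ⬝ᵥ y ≤ ‖WithLp.toLp 2 x‖ * ‖WithLp.toLp 2 y‖ := by
  simpa [EuclideanSpace.inner_toLp_toLp, dotProduct_comm] using
    real_inner_le_norm (WithLp.toLp 2 x) (WithLp.toLp 2 y)

theorem dotProduct_self_eq_norm_toLp_sq (x : ι → ℝ) : x ⬝ᵥ x = ‖WithLp.toLp 2 x‖ ^ 2 := by
  rw [← real_inner_self_eq_norm_sq, EuclideanSpace.inner_toLp_toLp, star_trivial]

theorem Matrix.PosSemidef.tangent_le_dotProduct_mulVec {Q : Matrix ι ι ℝ} (hQ : Q.PosSemidef)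
    (x y : ι → ℝ) : y ⬝ᵥ Q *ᵥ y + 2 * ((x - y) ⬝ᵥ Q *ᵥ y) ≤ x ⬝ᵥ Q *ᵥ x := by
  have hsymm : y ⬝ᵥ Q *ᵥ x = x ⬝ᵥ Q *ᵥ y := by
    rw [dotProduct_mulVec, ← mulVec_transpose, dotProduct_comm]
    simpa using congrArg (fun M => x ⬝ᵥ M *ᵥ y) hQ.isHermitian.eq
  have hnonneg : 0 ≤ (x - y) ⬝ᵥ Q *ᵥ (x - y) := by simpa using hQ.dotProduct_mulVec_nonneg (x - y)
  simp only [mulVec_sub, dotProduct_sub, sub_dotProduct, hsymm] at hnonneg ⊢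
  linarith

theorem groupLassoObjective_le_of_stationary {Q : Matrix ι ι ℝ} (hQ : Q.PosSemidef) {c : ι → ℝ}
    {lam μ : ℝ} (hμ : 0 ≤ μ) {xstar : ι → ℝ} (hstat : Q *ᵥ xstar + c + μ • xstar = 0)
    (hscale : μ * ‖WithLp.toLp 2 xstar‖ = lam) (x : ι → ℝ) :
    groupLassoObjective Q c lam xstar ≤ groupLassoObjective Q c lam x := by
  have hgrad : Q *ᵥ xstar = -(c + μ • xstar) := eq_neg_of_add_eq_zero_left (by rwa [← add_assoc])
  have htangent := hQ.tangent_le_dotProduct_mulVec x xstar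
  have hcs := mul_le_mul_of_nonneg_left (dotProduct_le_norm_toLp_mul_norm_toLp x xstar) hμ
  simp only [groupLassoObjective, ← hscale]
  simp only [hgrad, dotProduct_neg, dotProduct_add, dotProduct_smul, smul_eq_mul, sub_dotProduct,
    dotProduct_self_eq_norm_toLp_sq] at htangent ⊢
  rw [dotProduct_comm x c, dotProduct_comm xstar c] at htangent
  rw [dotProduct_comm xstar c]
  linarith

theorem stationary_of_eq_neg_smul_inv_mulVec [DecidableEq ι] {Q : Matrix ι ι ℝ} {c : ι → ℝ}
    {η ρ : ℝ} (hη : η ≠ 0) (hinv : IsUnit (η • Q + ρ • 1)) {xstar : ι → ℝ}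
    (hxstar : xstar = -η • (η • Q + ρ • 1)⁻¹ *ᵥ c) :
    Q *ᵥ xstar + c + (ρ / η) • xstar = 0 := by
  have hsolve : (η • Q + ρ • 1) *ᵥ xstar = -η • c := by
    rw [hxstar, mulVec_smul, mulVec_mulVec,
      mul_nonsing_inv _ ((isUnit_iff_isUnit_det _).mp hinv), one_mulVec]
  rw [add_mulVec, smul_mulVec, smul_mulVec, one_mulVec] at hsolve
  apply smul_right_injective _ hη
  simp only [smul_add, smul_zero, smul_smul, mul_div_cancel₀ ρ hη]
  rw [add_right_comm, hsolve, neg_smul, neg_add_cancel]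

theorem group_lasso_shrinkage_minimizer_general
    (n : ℕ) (Q : Matrix (Fin n) (Fin n) ℝ) (hQ : Q.PosSemidef)
    (c : Fin n → ℝ) (lam : ℝ)
    (f : (Fin n → ℝ) → ℝ)
    (hf : f = fun x => (1 / 2) * (x ⬝ᵥ Q.mulVec x) + c ⬝ᵥ x
        + lam * ‖(WithLp.equiv 2 (Fin n → ℝ)).symm x‖)
    (η : ℝ) (hη : 0 < η)
    (hinv : IsUnit (η • Q + (lam ^ 2 / 2) • (1 : Matrix (Fin n) (Fin n) ℝ)))
    (xstar : Fin n → ℝ)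
    (hxstar : xstar = -η • ((η • Q + (lam ^ 2 / 2) • (1 : Matrix (Fin n) (Fin n) ℝ))⁻¹.mulVec c))
    (hnorm : ‖(WithLp.equiv 2 (Fin n → ℝ)).symm xstar‖ = 2 * η / lam) :
    ∀ x : Fin n → ℝ, f xstar ≤ f x := by
  subst hf
  have hstat := stationary_of_eq_neg_smul_inv_mulVec hη.ne' hinv hxstar
  have hscale : lam ^ 2 / 2 / η * ‖WithLp.toLp 2 xstar‖ = lam := by
    rw [← WithLp.equiv_symm_apply, hnorm]
    field_simp
  exact groupLassoObjective_le_of_stationary hQ (by positivity) hstat hscale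

/-- for `Q ⪰ 0` symmetric, `c ∈ ℝⁿ`, `λ > 0`, suppose `η > 0` is such that
`ηQ + (λ²/2)I` is invertible and `x* = −η (ηQ + (λ²/2)I)⁻¹ c` satisfies `‖x*‖₂ = 2η/λ`.
Then `x*` globally minimizes `f(x) = (1/2) xᵀQx + cᵀx + λ‖x‖₂`. -/
theorem group_lasso_shrinkage_minimizer
    (n : ℕ) (Q : Matrix (Fin n) (Fin n) ℝ) (hQ : Q.PosSemidef)
    (c : Fin n → ℝ) (lam : ℝ) (hlam : 0 < lam)
    (f : (Fin n → ℝ) → ℝ)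
    (hf : f = fun x => (1 / 2) * (x ⬝ᵥ Q.mulVec x) + c ⬝ᵥ x
        + lam * ‖(WithLp.equiv 2 (Fin n → ℝ)).symm x‖)
    (η : ℝ) (hη : 0 < η)
    (hinv : IsUnit (η • Q + (lam ^ 2 / 2) • (1 : Matrix (Fin n) (Fin n) ℝ)))
    (xstar : Fin n → ℝ)
    (hxstar : xstar = -η • ((η • Q + (lam ^ 2 / 2) • (1 : Matrix (Fin n) (Fin n) ℝ))⁻¹.mulVec c))
    (hnorm : ‖(WithLp.equiv 2 (Fin n → ℝ)).symm xstar‖ = 2 * η / lam) :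
    ∀ x : Fin n → ℝ, f xstar ≤ f x :=
  group_lasso_shrinkage_minimizer_general n Q hQ c lam f hf η hη hinv xstar hxstar hnorm
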